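/- Let n ≥ 1, r ≥ 1, m > 0, c_1 ≥ 1, and let q̂_{ij} ∈ (0,1] for all i, j ∈ [n]. Let N ∈ ℝ^{n×n}, and let U ∈ ℝ^{n×r} have orthonormal columns satisfying ‖U^i‖² ≤ (c_1²·n/m)·q̂_{ij} for all i, j, where U^i is the i-th row of U. Let (δ_{ij})_{i,j∈[n]} be independent {0,1}-valued random variables with P(δ_{ij}=1) = q̂_{ij}, and let R be the random matrix with R_{ij} = δ_{ij}·N_{ij}/q̂_{ij}. Then for every δ > 0: P( ‖U^T R − U^T N‖ > δ·‖N‖_F ) ≤ c_1²·n/(m·δ²), where ‖·‖ is the spectral norm. -/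

import Mathlib

open Matrix MeasureTheory ProbabilityTheory

/-- Spectral norm (largest singular value) of a real matrix, as the operator
norm of the induced map between Euclidean spaces. -/
noncomputable def specNorm {n₁ n₂ : ℕ} (A : Matrix (Fin n₁) (Fin n₂) ℝ) : ℝ :=
  ‖LinearMap.toContinuousLinearMap (Matrix.toEuclideanLin A)‖

/-- Frobenius norm of a real matrix. -/
noncomputable def frobNorm {n₁ n₂ : ℕ} (A : Matrix (Fin n₁) (Fin n₂) ℝ) : ℝ :=
  Real.sqrt (∑ i, ∑ j, (A i j) ^ 2)

/-! Since `E δ_ij = q_ij`, each entry of `Uᵀ R - Uᵀ N` is the centred sum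
`∑ i, U_ik N_ij / q_ij * (δ_ij - q_ij)` of independent terms, so its second moment is its
variance; as `Var δ_ij ≤ E δ_ij² = q_ij`, this is at most `∑ i, U_ik² N_ij² / q_ij`. Summing over
the entries and using the bound on the row norms of `U` gives
`E ‖Uᵀ R - Uᵀ N‖_F² ≤ (c₁² n / m) ‖N‖_F²`. The spectral norm is at most the Frobenius norm, and
Markov's inequality for the squared Frobenius norm finishes the proof. -/

section ZeroOne

variable {Ω : Type*} [MeasurableSpace Ω] {μ : Measure Ω} {X : Ω → ℝ}

lemma integral_eq_measureReal_of_zero_or_one (hX : Measurable X)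
    (h01 : ∀ ω, X ω = 0 ∨ X ω = 1) : ∫ ω, X ω ∂μ = μ.real {ω | X ω = 1} := by
  have hind : ∀ ω, X ω = {ω | X ω = 1}.indicator (fun _ => 1) ω := fun ω => by
    rcases h01 ω with h | h <;> simp [Set.indicator, h]
  have hmeas : MeasurableSet {ω | X ω = 1} := hX (measurableSet_singleton 1)
  rw [integral_congr_ae (ae_of_all _ hind), integral_indicator_const _ hmeas, smul_eq_mul,
    mul_one]

lemma memLp_of_zero_or_one [IsFiniteMeasure μ] (hX : Measurable X)
    (h01 : ∀ ω, X ω = 0 ∨ X ω = 1) (p : ENNReal) : MemLp X p μ :=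
  .of_bound hX.aestronglyMeasurable 1 <| ae_of_all _ fun ω => by
    rcases h01 ω with h | h <;> simp [h]

lemma variance_le_integral_of_zero_or_one [IsProbabilityMeasure μ] (hX : Measurable X)
    (h01 : ∀ ω, X ω = 0 ∨ X ω = 1) : variance X μ ≤ ∫ ω, X ω ∂μ := by
  have hsq : ∀ ω, X ω ^ 2 = X ω := fun ω => by
    rcases h01 ω with h | h <;> simp [h]
  simpa [hsq] using variance_le_expectation_sq hX.aestronglyMeasurable (μ := μ)

lemma variance_sum_mul_le_of_zero_or_one [IsProbabilityMeasure μ] {ι : Type*} [Fintype ι]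
    {X : ι → Ω → ℝ} (hX : ∀ i, Measurable (X i)) (h01 : ∀ i ω, X i ω = 0 ∨ X i ω = 1)
    (hind : Pairwise fun i j => IndepFun (X i) (X j) μ) (b : ι → ℝ) :
    variance (fun ω => ∑ i, b i * X i ω) μ ≤ ∑ i, b i ^ 2 * ∫ ω, X i ω ∂μ := by
  have hsum : (fun ω => ∑ i, b i * X i ω) = ∑ i, fun ω => b i * X i ω := by
    funext ω; simp
  rw [hsum, IndepFun.variance_sum
    (fun i _ => (memLp_of_zero_or_one (hX i) (h01 i) 2).const_mul (b i))
    (fun i _ j _ hij =>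
      (hind hij).comp (measurable_const_mul (b i)) (measurable_const_mul (b j)))]
  gcongr with i
  rw [variance_const_mul]
  exact mul_le_mul_of_nonneg_left (variance_le_integral_of_zero_or_one (hX i) (h01 i))
    (sq_nonneg _)

end ZeroOne

lemma measure_sq_lt_le_of_integral_le {Ω : Type*} [MeasurableSpace Ω] {μ : Measure Ω}
    [IsFiniteMeasure μ] {Z : Ω → ℝ} (hZ : 0 ≤ Z) (hZi : Integrable Z μ) {C t δ : ℝ} (hδ : 0 < δ)
    (hE : ∫ ω, Z ω ∂μ ≤ C * t ^ 2) :
    μ {ω | (δ * t) ^ 2 < Z ω} ≤ ENNReal.ofReal (C / δ ^ 2) := by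
  rcases eq_or_ne t 0 with rfl | ht
  · have hZ0 : Z =ᵐ[μ] 0 := (integral_eq_zero_iff_of_nonneg hZ hZi).1 <|
      le_antisymm (by simpa using hE) (integral_nonneg hZ)
    refine le_of_eq_of_le (measure_mono_null (fun ω hω => ?_) (ae_iff.1 hZ0)) (by simp)
    exact ne_of_gt (by simpa using hω)
  · have hmarkov : (δ * t) ^ 2 * μ.real {ω | (δ * t) ^ 2 ≤ Z ω} ≤ C * t ^ 2 :=
      (mul_meas_ge_le_integral_of_nonneg (ae_of_all _ hZ) hZi _).trans hE
    calc μ {ω | (δ * t) ^ 2 < Z ω}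
        ≤ μ {ω | (δ * t) ^ 2 ≤ Z ω} :=
          measure_mono <| Set.ofPred_subset_ofPred.2 fun _ => le_of_lt
      _ = ENNReal.ofReal (μ.real {ω | (δ * t) ^ 2 ≤ Z ω}) :=
          (ofReal_measureReal (measure_ne_top _ _)).symm
      _ ≤ ENNReal.ofReal (C / δ ^ 2) := by
        gcongr
        rw [le_div_iff₀ (by positivity)]
        exact le_of_mul_le_mul_left (by linarith [hmarkov]) (sq_pos_of_ne_zero ht)

lemma specNorm_le_frobNorm {n₁ n₂ : ℕ} (A : Matrix (Fin n₁) (Fin n₂) ℝ) :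
    specNorm A ≤ frobNorm A := by
  unfold specNorm frobNorm
  apply ContinuousLinearMap.opNorm_le_bound _ (Real.sqrt_nonneg _)
  intro x
  have hTx : ‖(LinearMap.toContinuousLinearMap (Matrix.toEuclideanLin A)) x‖
      = Real.sqrt (∑ i, (∑ j, A i j * x j) ^ 2) := by
    rw [EuclideanSpace.norm_eq]
    congr 1
    refine Finset.sum_congr rfl fun i _ => ?_
    rw [Real.norm_eq_abs, sq_abs]
    rfl
  have hx : ‖x‖ = Real.sqrt (∑ j, (x j) ^ 2) := by
    rw [EuclideanSpace.norm_eq]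
    congr 1
    exact Finset.sum_congr rfl fun j _ => by rw [Real.norm_eq_abs, sq_abs]
  rw [hTx, hx, ← Real.sqrt_mul (by positivity)]
  apply Real.sqrt_le_sqrt
  rw [Finset.sum_mul]
  exact Finset.sum_le_sum fun i _ =>
    Finset.sum_mul_sq_le_sq_mul_sq Finset.univ (fun j => A i j) (fun j => x j)

lemma frobNorm_nonneg {n₁ n₂ : ℕ} (A : Matrix (Fin n₁) (Fin n₂) ℝ) : 0 ≤ frobNorm A :=
  Real.sqrt_nonneg _

lemma frobNorm_sq {n₁ n₂ : ℕ} (A : Matrix (Fin n₁) (Fin n₂) ℝ) :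
    frobNorm A ^ 2 = ∑ i, ∑ j, A i j ^ 2 :=
  Real.sq_sqrt (by positivity)

section Reweighting

variable {Ω : Type*} {n₁ n₂ r : ℕ}
  (U : Matrix (Fin n₁) (Fin r) ℝ) (q : Fin n₁ → Fin n₂ → ℝ) (N : Matrix (Fin n₁) (Fin n₂) ℝ)
  (X : Fin n₁ × Fin n₂ → Ω → ℝ)

-- The paper's `R`, with `X (i, j)` in the role of `δ_ij`.
noncomputable def reweightedSample (ω : Ω) : Matrix (Fin n₁) (Fin n₂) ℝ :=
  Matrix.of fun i j => X (i, j) ω * N i j / q i j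

lemma transpose_mul_reweightedSample_apply (ω : Ω) (k : Fin r) (j : Fin n₂) :
    (Uᵀ * reweightedSample q N X ω) k j = ∑ i, U i k * N i j / q i j * X (i, j) ω := by
  simp only [reweightedSample, mul_apply, transpose_apply, of_apply]
  exact Finset.sum_congr rfl fun i _ => by ring

variable {U q N X} [MeasurableSpace Ω] {μ : Measure Ω}

lemma integral_transpose_mul_reweightedSample_apply (hq : ∀ i j, q i j ≠ 0)
    (hX : ∀ p, Integrable (X p) μ) (hmean : ∀ p, ∫ ω, X p ω ∂μ = q p.1 p.2)
    (k : Fin r) (j : Fin n₂) :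
    ∫ ω, (Uᵀ * reweightedSample q N X ω) k j ∂μ = (Uᵀ * N) k j := by
  simp_rw [transpose_mul_reweightedSample_apply]
  rw [integral_finsetSum _ fun i _ => (hX (i, j)).const_mul _]
  simp only [mul_apply, transpose_apply, integral_const_mul, hmean]
  exact Finset.sum_congr rfl fun i _ => by field_simp [hq i j]

lemma memLp_transpose_mul_reweightedSample_apply [IsFiniteMeasure μ]
    (hX : ∀ p, Measurable (X p)) (h01 : ∀ p ω, X p ω = 0 ∨ X p ω = 1) (k : Fin r) (j : Fin n₂) :
    MemLp (fun ω => (Uᵀ * reweightedSample q N X ω) k j) 2 μ := by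
  simp_rw [transpose_mul_reweightedSample_apply]
  exact memLp_finsetSum _ fun i _ =>
    (memLp_of_zero_or_one (hX (i, j)) (h01 (i, j)) 2).const_mul _

lemma integrable_sq_sub_transpose_mul_apply [IsFiniteMeasure μ] (hX : ∀ p, Measurable (X p))
    (h01 : ∀ p ω, X p ω = 0 ∨ X p ω = 1) (k : Fin r) (j : Fin n₂) :
    Integrable (fun ω => ((Uᵀ * reweightedSample q N X ω) k j - (Uᵀ * N) k j) ^ 2) μ :=
  ((memLp_transpose_mul_reweightedSample_apply hX h01 k j).sub (memLp_const _)).integrable_sq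

lemma integral_sq_sub_transpose_mul_apply_le [IsProbabilityMeasure μ] (hq : ∀ i j, 0 < q i j)
    (hX : ∀ p, Measurable (X p)) (h01 : ∀ p ω, X p ω = 0 ∨ X p ω = 1) (hind : iIndepFun X μ)
    (hmean : ∀ p, ∫ ω, X p ω ∂μ = q p.1 p.2) (k : Fin r) (j : Fin n₂) :
    ∫ ω, ((Uᵀ * reweightedSample q N X ω) k j - (Uᵀ * N) k j) ^ 2 ∂μ
      ≤ ∑ i, U i k ^ 2 * (N i j ^ 2 / q i j) := by
  have hXint : ∀ p, Integrable (X p) μ := fun p =>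
    (memLp_of_zero_or_one (hX p) (h01 p) 1).integrable le_rfl
  rw [← integral_transpose_mul_reweightedSample_apply (fun i j => (hq i j).ne') hXint hmean,
    ← variance_eq_integral (memLp_transpose_mul_reweightedSample_apply hX h01 k j).aemeasurable]
  simp_rw [transpose_mul_reweightedSample_apply]
  calc variance (fun ω => ∑ i, U i k * N i j / q i j * X (i, j) ω) μ
      ≤ ∑ i, (U i k * N i j / q i j) ^ 2 * ∫ ω, X (i, j) ω ∂μ :=
        variance_sum_mul_le_of_zero_or_one (fun i => hX (i, j)) (fun i => h01 (i, j))
          (fun i i' hii' => hind.indepFun (by simpa using hii')) _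
    _ = ∑ i, U i k ^ 2 * (N i j ^ 2 / q i j) :=
        Finset.sum_congr rfl fun i _ => by rw [hmean (i, j)]; field_simp [(hq i j).ne']

lemma integrable_frobNorm_sq_sub [IsFiniteMeasure μ] (hX : ∀ p, Measurable (X p))
    (h01 : ∀ p ω, X p ω = 0 ∨ X p ω = 1) :
    Integrable (fun ω => frobNorm (Uᵀ * reweightedSample q N X ω - Uᵀ * N) ^ 2) μ := by
  simp_rw [frobNorm_sq, Matrix.sub_apply]
  exact integrable_finsetSum _ fun k _ => integrable_finsetSum _ fun j _ =>
    integrable_sq_sub_transpose_mul_apply hX h01 k j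

lemma integral_frobNorm_sq_sub_le [IsProbabilityMeasure μ] (hq : ∀ i j, 0 < q i j)
    (hX : ∀ p, Measurable (X p)) (h01 : ∀ p ω, X p ω = 0 ∨ X p ω = 1) (hind : iIndepFun X μ)
    (hmean : ∀ p, ∫ ω, X p ω ∂μ = q p.1 p.2) :
    ∫ ω, frobNorm (Uᵀ * reweightedSample q N X ω - Uᵀ * N) ^ 2 ∂μ
      ≤ ∑ i, ∑ j, (∑ k, U i k ^ 2) * (N i j ^ 2 / q i j) := by
  have hint := integrable_sq_sub_transpose_mul_apply (μ := μ) (U := U) (q := q) (N := N) hX h01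
  simp_rw [frobNorm_sq, Matrix.sub_apply]
  rw [integral_finsetSum _ fun k _ => integrable_finsetSum _ fun j _ => hint k j]
  calc ∑ k, ∫ ω, ∑ j, ((Uᵀ * reweightedSample q N X ω) k j - (Uᵀ * N) k j) ^ 2 ∂μ
      = ∑ k, ∑ j, ∫ ω, ((Uᵀ * reweightedSample q N X ω) k j - (Uᵀ * N) k j) ^ 2 ∂μ :=
        Finset.sum_congr rfl fun k _ => integral_finsetSum _ fun j _ => hint k j
    _ ≤ ∑ k, ∑ j, ∑ i, U i k ^ 2 * (N i j ^ 2 / q i j) := by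
        gcongr with k _ j
        exact integral_sq_sub_transpose_mul_apply_le hq hX h01 hind hmean k j
    _ = ∑ i, ∑ j, (∑ k, U i k ^ 2) * (N i j ^ 2 / q i j) := by
        simp_rw [Finset.sum_mul]
        rw [Finset.sum_comm]
        exact (Finset.sum_congr rfl fun _ _ => Finset.sum_comm).trans Finset.sum_comm

end Reweighting

lemma sum_sq_mul_sq_div_le_mul_frobNorm_sq {n₁ n₂ r : ℕ} {U : Matrix (Fin n₁) (Fin r) ℝ}
    {q : Fin n₁ → Fin n₂ → ℝ} (hq : ∀ i j, 0 < q i j) {c : ℝ}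
    (hU : ∀ i j, ∑ k, U i k ^ 2 ≤ c * q i j) (N : Matrix (Fin n₁) (Fin n₂) ℝ) :
    ∑ i, ∑ j, (∑ k, U i k ^ 2) * (N i j ^ 2 / q i j) ≤ c * frobNorm N ^ 2 := by
  rw [frobNorm_sq, Finset.mul_sum]
  refine Finset.sum_le_sum fun i _ => ?_
  rw [Finset.mul_sum]
  refine Finset.sum_le_sum fun j _ => ?_
  calc (∑ k, U i k ^ 2) * (N i j ^ 2 / q i j)
      ≤ c * q i j * (N i j ^ 2 / q i j) :=
        mul_le_mul_of_nonneg_right (hU i j) (div_nonneg (sq_nonneg _) (hq i j).le)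
    _ = c * N i j ^ 2 := by field_simp [(hq i j).ne']

theorem stmt14_general {n r : ℕ} (m c1 : ℝ)
    (qhat : Fin n → Fin n → ℝ) (hq : ∀ i j, qhat i j ∈ Set.Ioc (0 : ℝ) 1)
    (N : Matrix (Fin n) (Fin n) ℝ)
    (U : Matrix (Fin n) (Fin r) ℝ)
    (hub : ∀ i j, (∑ k, (U i k) ^ 2) ≤ (c1 ^ 2 * n / m) * qhat i j)
    {Ω : Type*} [MeasureSpace Ω] [IsProbabilityMeasure (ℙ : Measure Ω)]
    (X : Fin n × Fin n → Ω → ℝ)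
    (hmeas : ∀ p, Measurable (X p))
    (hval : ∀ p ω, X p ω = 0 ∨ X p ω = 1)
    (hind : iIndepFun X ℙ)
    (hX : ∀ p, ℙ {ω | X p ω = 1} = ENNReal.ofReal (qhat p.1 p.2))
    (δ : ℝ) (hδ : 0 < δ) :
    ℙ {ω | δ * frobNorm N <
        specNorm ((Matrix.of fun k j => ∑ i, U i k * (X (i, j) ω * N i j / qhat i j))
          - Uᵀ * N)} ≤
      ENNReal.ofReal (c1 ^ 2 * n / (m * δ ^ 2)) := by
  have hq0 : ∀ i j, 0 < qhat i j := fun i j => (hq i j).1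
  have hmean : ∀ p, ∫ ω, X p ω = qhat p.1 p.2 := fun p => by
    rw [integral_eq_measureReal_of_zero_or_one (hmeas p) (hval p), measureReal_def, hX p,
      ENNReal.toReal_ofReal (hq0 p.1 p.2).le]
  have hE : ∫ ω, frobNorm (Uᵀ * reweightedSample qhat N X ω - Uᵀ * N) ^ 2
      ≤ c1 ^ 2 * n / m * frobNorm N ^ 2 :=
    (integral_frobNorm_sq_sub_le hq0 hmeas hval hind hmean).trans
      (sum_sq_mul_sq_div_le_mul_frobNorm_sq hq0 hub N)
  -- The matrix in the event is `Uᵀ * reweightedSample qhat N X ω - Uᵀ * N` up to unfolding.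
  calc _ ≤ ℙ {ω | (δ * frobNorm N) ^ 2
          < frobNorm (Uᵀ * reweightedSample qhat N X ω - Uᵀ * N) ^ 2} :=
        measure_mono <| Set.ofPred_subset_ofPred.2 fun ω hω => pow_lt_pow_left₀
          (hω.trans_le (specNorm_le_frobNorm _))
          (mul_nonneg hδ.le (frobNorm_nonneg N)) two_ne_zero
    _ ≤ ENNReal.ofReal (c1 ^ 2 * n / m / δ ^ 2) :=
        measure_sq_lt_le_of_integral_le (fun _ => sq_nonneg _)
          (integrable_frobNorm_sq_sub hmeas hval) hδ hE
    _ = ENNReal.ofReal (c1 ^ 2 * n / (m * δ ^ 2)) := by rw [div_div]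

theorem stmt14 {n r : ℕ} (hn : 1 ≤ n) (hr : 1 ≤ r) (m c1 : ℝ) (hm : 0 < m) (hc1 : 1 ≤ c1)
    (qhat : Fin n → Fin n → ℝ) (hq : ∀ i j, qhat i j ∈ Set.Ioc (0 : ℝ) 1)
    (N : Matrix (Fin n) (Fin n) ℝ)
    (U : Matrix (Fin n) (Fin r) ℝ) (hU : Uᵀ * U = 1)
    (hub : ∀ i j, (∑ k, (U i k) ^ 2) ≤ (c1 ^ 2 * n / m) * qhat i j)
    {Ω : Type*} [MeasureSpace Ω] [IsProbabilityMeasure (ℙ : Measure Ω)]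
    (X : Fin n × Fin n → Ω → ℝ)
    (hmeas : ∀ p, Measurable (X p))
    (hval : ∀ p ω, X p ω = 0 ∨ X p ω = 1)
    (hind : iIndepFun X ℙ)
    (hX : ∀ p, ℙ {ω | X p ω = 1} = ENNReal.ofReal (qhat p.1 p.2))
    (δ : ℝ) (hδ : 0 < δ) :
    ℙ {ω | δ * frobNorm N <
        specNorm ((Matrix.of fun k j => ∑ i, U i k * (X (i, j) ω * N i j / qhat i j))
          - Uᵀ * N)} ≤
      ENNReal.ofReal (c1 ^ 2 * n / (m * δ ^ 2)) :=
  stmt14_general m c1 qhat hq N U hub X hmeas hval hind hX δ hδ
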